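/- Let R be a finite commutative ring with identity, T = Tr(R), and n1, n2 nonzero zero-divisors of R. Let A be the matrix with a11 = n1, a12 = n2, a21 = 0, a22 = 0. Then a matrix B = [[a,b],[0,c]] in T \ Z(T) with B ≠ A commutes with A if and only if b·n1 + (c−a)·n2 = 0. Moreover, if S denotes the number of pairs (x,y) ∈ R × R with n1·x + n2·y = 0, then |N(A)| = S·|R| − |R| − 1. -/

import Mathlib

open Matrix

/-- The ring of 2×2 upper triangular matrices over `R`. -/
def Tri (R : Type*) [CommRing R] : Subring (Matrix (Fin 2) (Fin 2) R) where
  carrier := {A | A 1 0 = 0}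
  mul_mem' := by
    intro a b ha hb
    simp only [Set.mem_setOf_eq] at *
    simp [Matrix.mul_apply, Fin.sum_univ_two, ha, hb]
  one_mem' := by simp [Matrix.one_apply]
  add_mem' := by
    intro a b ha hb
    simp_all [Matrix.add_apply]
  zero_mem' := by simp
  neg_mem' := by
    intro a ha
    simp_all

/-- The commuting graph of a ring `T`: vertices are the noncentral elements,
two distinct vertices are adjacent iff they commute. -/
def commGraph (T : Type*) [Ring T] : SimpleGraph {x : T // x ∉ Set.center T} where
  Adj a b := a ≠ b ∧ (a : T) * b = b * a
  symm := ⟨by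
    rintro a b ⟨h1, h2⟩
    exact ⟨h1.symm, h2.symm⟩⟩
  loopless := ⟨by rintro a ⟨h, _⟩; exact h rfl⟩

/-! Upper triangular matrices `[[a,b],[0,c]]` and `[[a',b'],[0,c']]` commute iff
`ab' + bc' = a'b + b'c`. For `A = [[n₁,n₂],[0,0]]` this reads `n₁ b + n₂ (c - a) = 0`, a condition
on `(b, c - a)` alone with `a` free, so the centralizer of `A` has `S · |R|` elements. It contains
the `|R|` scalar matrices, which form the centre, and `A` itself, which is not central since
`n₂ ≠ 0`; removing these leaves `N(A)`. -/

theorem card_noncentral_commuting_of_notMem_center {T : Type*} [Ring T] [Finite T] {A : T}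
    (hA : A ∉ Set.center T) :
    Nat.card {B : T | A * B = B * A ∧ B ≠ A ∧ B ∉ Set.center T} =
      Nat.card {B : T | A * B = B * A} - Nat.card (Set.center T) - 1 := by
  have hset : {B : T | A * B = B * A ∧ B ≠ A ∧ B ∉ Set.center T} =
      {B : T | A * B = B * A} \ insert A (Set.center T) := by
    ext B
    simp only [Set.mem_ofPred_eq, Set.mem_sdiff, Set.mem_insert_iff]
    tauto
  have hsub : insert A (Set.center T) ⊆ {B : T | A * B = B * A} := by
    rintro B (rfl | hB)
    · exact rfl
    · exact Semigroup.mem_center_iff.1 hB A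
  simp only [Nat.card_coe_set_eq]
  rw [hset, Set.ncard_sdiff hsub, Set.ncard_insert_of_notMem hA]
  omega

namespace Tri

variable {R : Type*} [CommRing R]

def mk (a b c : R) : Tri R := ⟨!![a, b; 0, c], rfl⟩

@[simp] lemma coe_mk (a b c : R) : (mk a b c : Matrix (Fin 2) (Fin 2) R) = !![a, b; 0, c] :=
  rfl

lemma mk_inj {a b c a' b' c' : R} : mk a b c = mk a' b' c' ↔ a = a' ∧ b = b' ∧ c = c' := by
  simp [← Subtype.coe_inj, and_assoc]

lemma exists_eq_mk (B : Tri R) : ∃ a b c, B = mk a b c := by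
  refine ⟨B.1 0 0, B.1 0 1, B.1 1 1, Subtype.ext ?_⟩
  ext i j
  fin_cases i <;> fin_cases j <;> simp [B.2.symm]

lemma mk_mul_mk (a b c a' b' c' : R) :
    mk a b c * mk a' b' c' = mk (a * a') (a * b' + b * c') (c * c') :=
  Subtype.ext (by simp)

lemma mk_mul_comm_iff {a b c a' b' c' : R} :
    mk a b c * mk a' b' c' = mk a' b' c' * mk a b c ↔ a * b' + b * c' = a' * b + b' * c := by
  simp [mk_mul_mk, mk_inj, mul_comm]

lemma mem_center_iff {B : Tri R} : B ∈ Set.center (Tri R) ↔ ∃ r, B = mk r 0 r := by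
  rw [Semigroup.mem_center_iff]
  constructor
  · intro hB
    obtain ⟨a, b, c, rfl⟩ := exists_eq_mk B
    have hb : b = 0 := by simpa using mk_mul_comm_iff.1 (hB (mk 1 0 0))
    have hc : c = a := by simpa using mk_mul_comm_iff.1 (hB (mk 0 1 0))
    exact ⟨a, by rw [hb, hc]⟩
  · rintro ⟨r, rfl⟩ g
    obtain ⟨a, b, c, rfl⟩ := exists_eq_mk g
    rw [mk_mul_comm_iff]
    ring

lemma mk_notMem_center {a b c : R} (hb : b ≠ 0) : mk a b c ∉ Set.center (Tri R) := by
  rw [mem_center_iff]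
  rintro ⟨r, hr⟩
  exact hb (mk_inj.1 hr).2.1

theorem card_center : Nat.card (Set.center (Tri R)) = Nat.card R := by
  have hrange : Set.center (Tri R) = Set.range fun r : R => mk r 0 r := by
    ext B
    rw [mem_center_iff, Set.mem_range]
    exact exists_congr fun r => eq_comm
  rw [hrange, Nat.card_range_of_injective fun r s h => (mk_inj.1 h).1]

theorem card_centralizer_mk (α β γ : R) :
    Nat.card {B : Tri R | mk α β γ * B = B * mk α β γ} =
      Nat.card {p : R × R | (α - γ) * p.1 + β * p.2 = 0} * Nat.card R := by
  set P := {p : R × R | (α - γ) * p.1 + β * p.2 = 0}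
  let f : P × R → Tri R := fun q => mk q.2 q.1.1.1 (q.2 + q.1.1.2)
  have hf : Function.Injective f := by
    rintro ⟨⟨⟨x, y⟩, hp⟩, a⟩ ⟨⟨⟨x', y'⟩, hp'⟩, a'⟩ h
    obtain ⟨rfl, rfl, h⟩ := mk_inj.1 h
    simp_all
  have hrange : {B : Tri R | mk α β γ * B = B * mk α β γ} = Set.range f := by
    ext B
    obtain ⟨a, b, c, rfl⟩ := exists_eq_mk B
    simp only [Set.mem_ofPred_eq, Set.mem_range, mk_mul_comm_iff]
    constructor
    · intro h
      refine ⟨⟨⟨(b, c - a), ?_⟩, a⟩, ?_⟩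
      · show (α - γ) * b + β * (c - a) = 0
        linear_combination h
      · simp [f]
    · rintro ⟨⟨⟨⟨x, y⟩, hp⟩, a'⟩, h⟩
      obtain ⟨rfl, rfl, rfl⟩ := mk_inj.1 h
      have hp : (α - γ) * x + β * y = 0 := hp
      linear_combination hp
  rw [hrange, Nat.card_range_of_injective hf, Nat.card_prod]

end Tri

theorem neighbourhood_A6_general {R : Type*} [CommRing R] [Fintype R] (n₁ n₂ : R)
    (hn₂ : n₂ ≠ 0)
    (A : Tri R) (hA : (A : Matrix (Fin 2) (Fin 2) R) = !![n₁, n₂; 0, 0]) :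
    (∀ (B : Tri R) (a b c : R),
        (B : Matrix (Fin 2) (Fin 2) R) = !![a, b; 0, c] →
        B ∉ Set.center (Tri R) → B ≠ A →
        (A * B = B * A ↔ b * n₁ + (c - a) * n₂ = 0)) ∧
    Nat.card {B : Tri R | A * B = B * A ∧ B ≠ A ∧ B ∉ Set.center (Tri R)} =
      Nat.card {p : R × R | n₁ * p.1 + n₂ * p.2 = 0} * Nat.card R -
        Nat.card R - 1 := by
  obtain rfl : A = Tri.mk n₁ n₂ 0 := Subtype.ext hA
  refine ⟨fun B a b c hB _ _ => ?_, ?_⟩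
  · rw [show B = Tri.mk a b c from Subtype.ext hB, Tri.mk_mul_comm_iff]
    constructor <;> intro h <;> linear_combination h
  · rw [card_noncentral_commuting_of_notMem_center (Tri.mk_notMem_center hn₂),
      Tri.card_centralizer_mk, Tri.card_center, sub_zero]

/-- Theorem 2.2(vi): for `A = [[n₁,n₂],[0,0]]` with `n₁, n₂` nonzero
zero-divisors, a noncentral `B = [[a,b],[0,c]] ≠ A` commutes with `A` iff
`b n₁ + (c - a) n₂ = 0`; moreover if `S` is the number of pairs `(x,y)` with
`n₁ x + n₂ y = 0` then `|N(A)| = S |R| - |R| - 1`. -/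
theorem neighbourhood_A6 {R : Type*} [CommRing R] [Fintype R] (n₁ n₂ : R)
    (hn₁ : n₁ ≠ 0) (hn₂ : n₂ ≠ 0)
    (hzd₁ : ∃ s : R, s ≠ 0 ∧ s * n₁ = 0) (hzd₂ : ∃ s : R, s ≠ 0 ∧ s * n₂ = 0)
    (A : Tri R) (hA : (A : Matrix (Fin 2) (Fin 2) R) = !![n₁, n₂; 0, 0]) :
    (∀ (B : Tri R) (a b c : R),
        (B : Matrix (Fin 2) (Fin 2) R) = !![a, b; 0, c] →
        B ∉ Set.center (Tri R) → B ≠ A →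
        (A * B = B * A ↔ b * n₁ + (c - a) * n₂ = 0)) ∧
    Nat.card {B : Tri R | A * B = B * A ∧ B ≠ A ∧ B ∉ Set.center (Tri R)} =
      Nat.card {p : R × R | n₁ * p.1 + n₂ * p.2 = 0} * Nat.card R -
        Nat.card R - 1 :=
  neighbourhood_A6_general n₁ n₂ hn₂ A hA
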